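/- Let w ∈ ℂⁿ have all entries non-zero, and for Λ ⊆ {1,…,n} let V_Λ = {v ∈ w^⊥ : v_j = 0 for all j ∉ Λ}. If Λ₁, Λ₂ are non-empty subsets with Λ₁ ∩ Λ₂ = ∅, then V_{Λ₁} + V_{Λ₂} is a subspace of V_{Λ₁ ∪ Λ₂} of codimension 1. -/

import Mathlib

open Finset

/-- For `w ∈ ℂⁿ` and `Λ ⊆ {1,…,n}`, the space `V_Λ = {v ∈ w^⊥ : v_j = 0 ∀ j ∉ Λ}`,
where `w^⊥ = {v : Σⱼ vⱼ wⱼ = 0}`. -/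
noncomputable def Vsub {n : ℕ} (w : Fin n → ℂ) (Λ : Finset (Fin n)) :
    Submodule ℂ (Fin n → ℂ) :=
  (LinearMap.ker (∑ j, w j • (LinearMap.proj j : (Fin n → ℂ) →ₗ[ℂ] ℂ))) ⊓
    ⨅ j ∈ {j | j ∉ Λ}, LinearMap.ker (LinearMap.proj j : (Fin n → ℂ) →ₗ[ℂ] ℂ)

/-!
`V_Λ` is the kernel of the functional `v ↦ Σⱼ wⱼ vⱼ` restricted to the `#Λ`-dimensional space of
vectors supported in `Λ`; since `w` has a non-zero entry in `Λ` this restriction is non-zero, so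
`dim V_Λ = #Λ - 1`. For disjoint `Λ₁, Λ₂` the spaces `V_{Λ₁}` and `V_{Λ₂}` meet trivially, hence
`dim (V_{Λ₁} + V_{Λ₂}) = #Λ₁ + #Λ₂ - 2 = dim V_{Λ₁ ∪ Λ₂} - 1`.
-/

open Module

theorem finrank_ker_inf_add_one {K V : Type*} [Field K] [AddCommGroup V] [Module K V]
    [FiniteDimensional K V] {f : Dual K V} {p : Submodule K V} (hp : ¬p ≤ LinearMap.ker f) :
    finrank K ↥(LinearMap.ker f ⊓ p) + 1 = finrank K p := by
  have hf : f.domRestrict p ≠ 0 := fun hf ↦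
    hp fun x hx ↦ LinearMap.congr_fun hf ⟨x, hx⟩
  rw [← Dual.finrank_ker_add_one_of_ne_zero hf, LinearMap.ker_domRestrict,
    ← Submodule.finrank_map_subtype_eq, Submodule.map_comap_subtype, inf_comm]

theorem finrank_iInf_ker_proj {K ι : Type*} [Field K] [Fintype ι] (s : Finset ι) :
    finrank K ↥(⨅ j ∈ {j | j ∉ s}, LinearMap.ker (LinearMap.proj j : (ι → K) →ₗ[K] K)) =
      #s := by
  classical
  rw [(LinearMap.iInfKerProjEquiv K (fun _ ↦ K) (I := s) (J := {j | j ∉ s})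
    (Set.disjoint_left.mpr fun _ hj hj' ↦ hj' hj) fun j _ ↦ em _).finrank_eq]
  simp

section Vsub

variable {n : ℕ} (w : Fin n → ℂ)

theorem apply_eq_zero_of_mem_Vsub {Λ : Finset (Fin n)} {v : Fin n → ℂ} (hv : v ∈ Vsub w Λ)
    {j : Fin n} (hj : j ∉ Λ) : v j = 0 :=
  (Submodule.mem_iInf _).mp ((Submodule.mem_iInf _).mp hv.2 j) hj

theorem Vsub_mono {Λ Λ' : Finset (Fin n)} (h : Λ ⊆ Λ') : Vsub w Λ ≤ Vsub w Λ' :=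
  inf_le_inf_left _ <| biInf_mono fun _ hj hj' ↦ hj (h hj')

theorem disjoint_Vsub {Λ₁ Λ₂ : Finset (Fin n)} (h : Disjoint Λ₁ Λ₂) :
    Disjoint (Vsub w Λ₁) (Vsub w Λ₂) := by
  refine Submodule.disjoint_def.mpr fun v hv₁ hv₂ ↦ funext fun j ↦ ?_
  by_cases hj : j ∈ Λ₁
  · exact apply_eq_zero_of_mem_Vsub w hv₂ (disjoint_left.mp h hj)
  · exact apply_eq_zero_of_mem_Vsub w hv₁ hj

theorem finrank_Vsub_add_one {Λ : Finset (Fin n)} (hΛ : ∃ j ∈ Λ, w j ≠ 0) :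
    finrank ℂ (Vsub w Λ) + 1 = #Λ := by
  obtain ⟨j, hjΛ, hwj⟩ := hΛ
  rw [← finrank_iInf_ker_proj (K := ℂ) Λ]
  refine finrank_ker_inf_add_one fun hle ↦ hwj ?_
  have hsingle : (Pi.single j 1 : Fin n → ℂ) ∈
      ⨅ i ∈ {i | i ∉ Λ}, LinearMap.ker (LinearMap.proj i : (Fin n → ℂ) →ₗ[ℂ] ℂ) := by
    simp only [Submodule.mem_iInf, LinearMap.mem_ker, LinearMap.proj_apply]
    intro i hi
    exact Pi.single_eq_of_ne (ne_of_mem_of_not_mem hjΛ hi).symm 1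
  simpa [Pi.single_apply] using hle hsingle

end Vsub

/-- If `Λ₁, Λ₂` are non-empty and disjoint then `V_{Λ₁} + V_{Λ₂}` is a subspace of
`V_{Λ₁ ∪ Λ₂}` of codimension 1. -/
theorem stmt4 {n : ℕ} (w : Fin n → ℂ) (hw : ∀ j, w j ≠ 0)
    (Λ₁ Λ₂ : Finset (Fin n)) [DecidableEq (Fin n)]
    (h₁ : Λ₁.Nonempty) (h₂ : Λ₂.Nonempty) (h : Λ₁ ∩ Λ₂ = ∅) :
    Vsub w Λ₁ ⊔ Vsub w Λ₂ ≤ Vsub w (Λ₁ ∪ Λ₂) ∧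
      Module.finrank ℂ (Vsub w Λ₁ ⊔ Vsub w Λ₂ : Submodule ℂ (Fin n → ℂ)) + 1 =
        Module.finrank ℂ (Vsub w (Λ₁ ∪ Λ₂)) := by
  have hdisj : Disjoint Λ₁ Λ₂ := disjoint_iff_inter_eq_empty.mpr h
  have hΛ {Λ : Finset (Fin n)} (hne : Λ.Nonempty) : ∃ j ∈ Λ, w j ≠ 0 :=
    hne.imp fun j hj ↦ ⟨hj, hw j⟩
  refine ⟨sup_le (Vsub_mono w subset_union_left) (Vsub_mono w subset_union_right), ?_⟩
  have hsup := Submodule.finrank_sup_add_finrank_inf_eq (Vsub w Λ₁) (Vsub w Λ₂)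
  rw [(disjoint_Vsub w hdisj).eq_bot, finrank_bot, add_zero] at hsup
  have hV₁ := finrank_Vsub_add_one w (hΛ h₁)
  have hV₂ := finrank_Vsub_add_one w (hΛ h₂)
  have hV := finrank_Vsub_add_one w (hΛ (h₁.mono (subset_union_left (s₂ := Λ₂))))
  rw [card_union_of_disjoint hdisj] at hV
  omega
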